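/- Fix a stack s_x, a finite heap h, and a PSeqSL formula φ, and let T(s_x,h,φ) be the quantifier-free sequence-logic formula obtained by the inductive reduction: T(s_x,h,t_{x1}=t_{x2}) = (t_{x1}==t_{x2}); T(s_x,h,t_{α1}==t_{α2}) = (t_{α1}==t_{α2}); T(s_x,h,false) = false; T(s_x,h,φ1⇒φ2) = T(s_x,h,φ1) ⇒ T(s_x,h,φ2); T(s_x,h,emp) = the truth value of dom(h)=∅; T(s_x,h,x↦t_α) = the truth value of (dom(h)={s_x(x)} and s_x(x)∉Atoms) conjoined with the word equation h(s_x(x)) == t_α; T(s_x,h,φ1*φ2) = the disjunction over all splittings h = h1 ⊎ h2 of T(s_x,h1,φ1) ∧ T(s_x,h2,φ2); T(s_x,h,φ1-*φ2) = the conjunction over all heaps h_φ with dom(h_φ) ∩ dom(h) = ∅, dom(h_φ) ⊆ D and rng(h_φ) ⊆ R (D and R the finite sets from the small-model property of -*) of T(s_x,h_φ,φ1) ⇒ T(s_x,h_φ ⊎ h,φ2). Then: there exists an assignment s_α of sequence variables such that (s_x,s_α,h) ⊨ φ if and only if T(s_x,h,φ) is satisfiable, i.e., there exists an assignment of words to its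 sequence variables making it true. -/

import Mathlib

/-! Common framework for sequence-heap separation logic (SeqSL / PSeqSL).

Values: `Sum.inl n` is an element of `Loc ∪ Val = ℕ` (locations are the
naturals), `Sum.inr` is one of the two atoms `nil` and `#`.  A heap is a
finite partial map from locations to finite sequences of values. -/

inductive SAtom : Type
  | anil : SAtom
  | ahash : SAtom
deriving DecidableEq

abbrev SVal : Type := ℕ ⊕ SAtom

abbrev Word : Type := List SVal

abbrev Heap : Type := Finmap fun _ : ℕ => Word

/-- Program-variable terms: `nil`, `#`, or a program variable. -/
inductive PTerm : Type
  | nil : PTerm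
  | hash : PTerm
  | pvar : ℕ → PTerm
deriving DecidableEq

/-- Sequence terms: `ε`, an individual term, a sequence variable, or a
concatenation. -/
inductive STerm : Type
  | eps : STerm
  | atom : PTerm → STerm
  | svar : ℕ → STerm
  | conc : STerm → STerm → STerm
deriving DecidableEq

/-- PSeqSL formulas. -/
inductive PFormula : Type
  | eqx : PTerm → PTerm → PFormula
  | eqs : STerm → STerm → PFormula
  | fls : PFormula
  | imp : PFormula → PFormula → PFormula
  | emp : PFormula
  | pto : ℕ → STerm → PFormula
  | star : PFormula → PFormula → PFormula
  | wand : PFormula → PFormula → PFormula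
deriving DecidableEq

def PTerm.eval (sx : ℕ → SVal) : PTerm → SVal
  | .nil => Sum.inr SAtom.anil
  | .hash => Sum.inr SAtom.ahash
  | .pvar x => sx x

def STerm.eval (sx : ℕ → SVal) (sa : ℕ → Word) : STerm → Word
  | .eps => []
  | .atom t => [t.eval sx]
  | .svar a => sa a
  | .conc t₁ t₂ => t₁.eval sx sa ++ t₂.eval sx sa

/-- Satisfaction of PSeqSL formulas. -/
def PFormula.Sat (sx : ℕ → SVal) (sa : ℕ → Word) : PFormula → Heap → Prop
  | .eqx t₁ t₂, _ => t₁.eval sx = t₂.eval sx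
  | .eqs t₁ t₂, _ => t₁.eval sx sa = t₂.eval sx sa
  | .fls, _ => False
  | .imp φ₁ φ₂, h => PFormula.Sat sx sa φ₁ h → PFormula.Sat sx sa φ₂ h
  | .emp, h => h = ∅
  | .pto x t, h => ∃ l : ℕ, sx x = Sum.inl l ∧ h = Finmap.singleton l (t.eval sx sa)
  | .star φ₁ φ₂, h => ∃ h₁ h₂ : Heap, h₁.Disjoint h₂ ∧ h = h₁ ∪ h₂ ∧
      PFormula.Sat sx sa φ₁ h₁ ∧ PFormula.Sat sx sa φ₂ h₂
  | .wand φ₁ φ₂, h => ∀ h₁ : Heap, h₁.Disjoint h → PFormula.Sat sx sa φ₁ h₁ →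
      PFormula.Sat sx sa φ₂ (h₁ ∪ h)

/-- Free program variables of a program-variable term. -/
def PTerm.fv : PTerm → Finset ℕ
  | .pvar x => {x}
  | _ => ∅

/-- Free program variables of a sequence term. -/
def STerm.fvx : STerm → Finset ℕ
  | .eps => ∅
  | .atom t => t.fv
  | .svar _ => ∅
  | .conc t₁ t₂ => t₁.fvx ∪ t₂.fvx

/-- Free program variables of a PSeqSL formula. -/
def PFormula.fvx : PFormula → Finset ℕ
  | .eqx t₁ t₂ => t₁.fv ∪ t₂.fv
  | .eqs t₁ t₂ => t₁.fvx ∪ t₂.fvx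
  | .fls => ∅
  | .imp φ₁ φ₂ => φ₁.fvx ∪ φ₂.fvx
  | .emp => ∅
  | .pto x t => {x} ∪ t.fvx
  | .star φ₁ φ₂ => φ₁.fvx ∪ φ₂.fvx
  | .wand φ₁ φ₂ => φ₁.fvx ∪ φ₂.fvx

/-- Free sequence variables of a sequence term. -/
def STerm.fva : STerm → Finset ℕ
  | .eps => ∅
  | .atom _ => ∅
  | .svar a => {a}
  | .conc t₁ t₂ => t₁.fva ∪ t₂.fva

/-- Free sequence variables of a PSeqSL formula. -/
def PFormula.fva : PFormula → Finset ℕ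
  | .eqx _ _ => ∅
  | .eqs t₁ t₂ => t₁.fva ∪ t₂.fva
  | .fls => ∅
  | .imp φ₁ φ₂ => φ₁.fva ∪ φ₂.fva
  | .emp => ∅
  | .pto _ t => t.fva
  | .star φ₁ φ₂ => φ₁.fva ∪ φ₂.fva
  | .wand φ₁ φ₂ => φ₁.fva ∪ φ₂.fva

/-- Size of a PSeqSL formula. -/
def PFormula.sz : PFormula → ℕ
  | .eqx _ _ => 0
  | .eqs _ _ => 0
  | .fls => 0
  | .imp φ₁ φ₂ => max φ₁.sz φ₂.sz
  | .emp => 1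
  | .pto _ _ => 1
  | .star φ₁ φ₂ => φ₁.sz + φ₂.sz
  | .wand _ φ₂ => φ₂.sz

/-- The set of sequence terms (including program-variable terms) occurring in
a PSeqSL formula. -/
def PFormula.seqTerms : PFormula → Finset STerm
  | .eqx t₁ t₂ => {STerm.atom t₁, STerm.atom t₂}
  | .eqs t₁ t₂ => {t₁, t₂}
  | .fls => ∅
  | .imp φ₁ φ₂ => φ₁.seqTerms ∪ φ₂.seqTerms
  | .emp => ∅
  | .pto x t => {STerm.atom (PTerm.pvar x), t}
  | .star φ₁ φ₂ => φ₁.seqTerms ∪ φ₂.seqTerms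
  | .wand φ₁ φ₂ => φ₁.seqTerms ∪ φ₂.seqTerms

/-- The first `k` elements of a set `S ⊆ ℕ`. -/
def firstN (S : Set ℕ) (k : ℕ) : Set ℕ :=
  {l | l ∈ S ∧ Set.ncard {l' ∈ S | l' < l} < k}

/-- Terms of the target sequence logic: constant words and sequence
variables, closed under concatenation. -/
inductive CTerm : Type
  | const : Word → CTerm
  | svar : ℕ → CTerm
  | conc : CTerm → CTerm → CTerm
deriving DecidableEq

def CTerm.eval (sa : ℕ → Word) : CTerm → Word
  | .const w => w
  | .svar a => sa a
  | .conc t₁ t₂ => t₁.eval sa ++ t₂.eval sa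

/-- Embedding of the sequence terms of PSeqSL into the target terms, given
the stack `sx` (individual terms become one-letter constant words). -/
def STerm.embed (sx : ℕ → SVal) : STerm → CTerm
  | .eps => .const []
  | .atom t => .const [t.eval sx]
  | .svar a => .svar a
  | .conc t₁ t₂ => .conc (t₁.embed sx) (t₂.embed sx)

/-- Symbolic heaps: finite partial maps from locations to target terms. -/
abbrev SymHeap : Type := Finmap fun _ : ℕ => CTerm

/-- Truth, under an assignment `sa` of words to the sequence variables, of the
formula `T(sx, H, φ)` obtained by the inductive reduction of PSeqSL to
quantifier-free sequence logic.  The clauses follow the definition of `T`: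
equalities become word equations, `emp` and `x ↦ t` become conditions on the
(symbolic) heap together with a word equation, `*` becomes the disjunction
over all splittings of the heap, and `-*` becomes the conjunction over all
symbolic heaps disjoint from the current one with domain contained in
`D = B ∪ sx(L)` and range contained in
`R = SeqTerms(φ₁ -* φ₂) ∪ {ε, fresh value}`. -/
def Tsat (sx : ℕ → SVal) (sa : ℕ → Word) : PFormula → SymHeap → Prop
  | .eqx t₁ t₂, _ => t₁.eval sx = t₂.eval sx
  | .eqs t₁ t₂, _ => t₁.eval sx sa = t₂.eval sx sa
  | .fls, _ => False
  | .imp φ₁ φ₂, H => Tsat sx sa φ₁ H → Tsat sx sa φ₂ H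
  | .emp, H => H = ∅
  | .pto x t, H => ∃ l : ℕ, sx x = Sum.inl l ∧ H.keys = {l} ∧
      ∃ ct : CTerm, H.lookup l = some ct ∧ ct.eval sa = (t.embed sx).eval sa
  | .star φ₁ φ₂, H => ∃ H₁ H₂ : SymHeap, H₁.Disjoint H₂ ∧ H = H₁ ∪ H₂ ∧
      Tsat sx sa φ₁ H₁ ∧ Tsat sx sa φ₂ H₂
  | .wand φ₁ φ₂, H =>
      ∀ Hφ : SymHeap, Hφ.Disjoint H →
        (∀ l ∈ Hφ.keys,
          l ∈ firstN
    {l' : ℕ | l' ∉ H.keys ∧ ∀ x ∈ φ₁.fvx ∪ φ₂.fvx, sx x ≠ Sum.inl l'}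
              (max φ₁.sz φ₂.sz) ∨
          ∃ x ∈ φ₁.fvx ∪ φ₂.fvx, sx x = Sum.inl l) →
        (∀ (l : ℕ) (ct : CTerm), Hφ.lookup l = some ct →
          (∃ t ∈ φ₁.seqTerms ∪ φ₂.seqTerms, ct = t.embed sx) ∨
            ct = CTerm.const [] ∨
            ∃ w : Word, ct = CTerm.const w ∧
              ∀ t ∈ φ₁.seqTerms ∪ φ₂.seqTerms, (t.embed sx).eval sa ≠ w) →
        Tsat sx sa φ₁ Hφ → Tsat sx sa φ₂ (Hφ ∪ H)

/-! Fix the assignment `sa`; under it a symbolic heap `H` denotes the heap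
`H.map (CTerm.eval sa)`, and `T` commutes with every connective except `-*`, whose clause ranges
over finitely many heap extensions only. These suffice by the small-model property: a formula of
size at most `n` whose program variables point into `L` does not distinguish heaps that agree on
`L` and have the same number of cells outside `L`, counted up to `n` (`Finmap.Indist`). -/

theorem Nat.exists_add_eq_and_min_eq {c₁ c₂ c n₁ n₂ : ℕ}
    (h : min (c₁ + c₂) (n₁ + n₂) = min c (n₁ + n₂)) :
    ∃ d₁ d₂, d₁ + d₂ = c ∧ min c₁ n₁ = min d₁ n₁ ∧ min c₂ n₂ = min d₂ n₂ := by
  rcases le_or_gt (n₁ + n₂) (c₁ + c₂) with hc | hc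
  · rcases le_or_gt c₁ n₁ with h₁ | h₁
    · exact ⟨c₁, c - c₁, by omega, by omega, by omega⟩
    · exact ⟨c - min c₂ n₂, min c₂ n₂, by omega, by omega, by omega⟩
  · exact ⟨c₁, c₂, by omega, by omega, by omega⟩

namespace Finmap

variable {α β γ : Type*} [DecidableEq α]

def onFinset (s : Finset α) (f : α → Option β) : Finmap fun _ : α => β :=
  keysLookupEquiv.symm
    ⟨(s.filter fun a => (f a).isSome, fun a => if a ∈ s then f a else none), fun a => by
      by_cases ha : a ∈ s <;> simp [ha]⟩

@[simp]
theorem lookup_onFinset (s : Finset α) (f : α → Option β) (a : α) :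
    (onFinset s f).lookup a = if a ∈ s then f a else none := by
  simp [onFinset]

@[simp]
theorem keys_onFinset (s : Finset α) (f : α → Option β) :
    (onFinset s f).keys = s.filter fun a => (f a).isSome := by
  simp [onFinset]

theorem mem_iff_of_lookup_eq {m m' : Finmap fun _ : α => β} {a : α}
    (h : m.lookup a = m'.lookup a) : a ∈ m ↔ a ∈ m' := by
  rw [← lookup_isSome, h, lookup_isSome]

theorem lookup_union_eq_or (m m' : Finmap fun _ : α => β) (a : α) :
    (m ∪ m').lookup a = (m.lookup a).or (m'.lookup a) := by
  by_cases ha : a ∈ m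
  · obtain ⟨b, hb⟩ := mem_iff.mp ha
    rw [lookup_union_left ha, hb, Option.some_or]
  · rw [lookup_union_right ha, lookup_eq_none.mpr ha, Option.none_or]

def map (g : β → γ) (m : Finmap fun _ : α => β) : Finmap fun _ : α => γ :=
  onFinset m.keys fun a => (m.lookup a).map g

@[simp]
theorem lookup_map (g : β → γ) (m : Finmap fun _ : α => β) (a : α) :
    (m.map g).lookup a = (m.lookup a).map g := by
  by_cases ha : a ∈ m
  · simp [map, mem_keys.mpr ha]
  · simp [map, lookup_eq_none.mpr ha]

@[simp]
theorem mem_map {g : β → γ} {m : Finmap fun _ : α => β} {a : α} : a ∈ m.map g ↔ a ∈ m := by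
  rw [← lookup_isSome, lookup_map, Option.isSome_map, lookup_isSome]

@[simp]
theorem keys_map (g : β → γ) (m : Finmap fun _ : α => β) : (m.map g).keys = m.keys := by
  ext a
  simp only [mem_keys, mem_map]

theorem disjoint_map_iff {g : β → γ} {m m' : Finmap fun _ : α => β} :
    (m.map g).Disjoint (m'.map g) ↔ m.Disjoint m' := by
  simp only [Disjoint, mem_map]

theorem map_union (g : β → γ) (m m' : Finmap fun _ : α => β) :
    (m ∪ m').map g = m.map g ∪ m'.map g :=
  ext_lookup fun a => by
    simp only [lookup_map, lookup_union_eq_or]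
    cases m.lookup a <;> rfl

theorem map_map_of_leftInverse {g : β → γ} {g' : γ → β} (hg : Function.LeftInverse g' g)
    (m : Finmap fun _ : α => β) : (m.map g).map g' = m :=
  ext_lookup fun a => by
    simp only [lookup_map, Option.map_map, hg.comp_eq_id, Option.map_id_fun, id]

@[simp]
theorem map_eq_empty_iff {g : β → γ} {m : Finmap fun _ : α => β} : m.map g = ∅ ↔ m = ∅ := by
  refine ⟨fun h => ext_lookup fun a => ?_, fun h => h ▸ ext_lookup fun a => by simp⟩
  simpa using congrArg (lookup a) h

theorem map_eq_singleton_iff {g : β → γ} {m : Finmap fun _ : α => β} {a : α} {c : γ} :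
    m.map g = singleton a c ↔ m.keys = {a} ∧ ∃ b, m.lookup a = some b ∧ g b = c := by
  constructor
  · intro h
    refine ⟨by rw [← keys_map g, h, keys_singleton], Option.map_eq_some_iff.mp ?_⟩
    simpa using congrArg (lookup a) h
  · rintro ⟨hk, b, hb, rfl⟩
    refine ext_lookup fun x => ?_
    by_cases hx : x = a
    · subst hx
      simp [hb]
    · have hxm : x ∉ m := by rw [← mem_keys, hk, Finset.mem_singleton]; exact hx
      rw [lookup_map, lookup_eq_none.mpr hxm, Option.map_none, eq_comm, lookup_eq_none,
        mem_singleton]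
      exact hx

theorem exists_map_eq_and_forall {P : β → Prop} {g : β → γ}
    (hg : ∀ c, ∃ b, g b = c ∧ P b) (m : Finmap fun _ : α => γ) :
    ∃ m' : Finmap (fun _ : α => β), m'.map g = m ∧ ∀ a b, m'.lookup a = some b → P b := by
  choose g' hg' hP using hg
  refine ⟨m.map g', map_map_of_leftInverse hg' m, fun a b hb => ?_⟩
  obtain ⟨c, -, rfl⟩ := Option.map_eq_some_iff.mp ((lookup_map g' m a).symm.trans hb)
  exact hP c

section Filter

variable (p : α → Prop) [DecidablePred p]

def filter (m : Finmap fun _ : α => β) : Finmap fun _ : α => β :=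
  onFinset m.keys fun a => if p a then m.lookup a else none

@[simp]
theorem lookup_filter (m : Finmap fun _ : α => β) (a : α) :
    (m.filter p).lookup a = if p a then m.lookup a else none := by
  by_cases ha : a ∈ m
  · simp [filter, mem_keys.mpr ha]
  · simp [filter, lookup_eq_none.mpr ha]

@[simp]
theorem mem_filter {m : Finmap fun _ : α => β} {a : α} : a ∈ m.filter p ↔ a ∈ m ∧ p a := by
  rw [← lookup_isSome, lookup_filter, ← lookup_isSome]
  split_ifs with ha <;> simp [ha]

theorem disjoint_filter_filter_not (m : Finmap fun _ : α => β) :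
    (m.filter p).Disjoint (m.filter fun a => ¬p a) := fun _ ha ha' =>
  ((mem_filter _).mp ha').2 ((mem_filter _).mp ha).2

theorem filter_union_filter_not (m : Finmap fun _ : α => β) :
    m.filter p ∪ m.filter (fun a => ¬p a) = m :=
  ext_lookup fun a => by
    by_cases ha : p a <;> simp [lookup_union_eq_or, ha]

theorem map_filter {γ : Type*} (g : β → γ) (m : Finmap fun _ : α => β) :
    (m.filter p).map g = (m.map g).filter p :=
  ext_lookup fun a => by
    by_cases ha : p a <;> simp [ha]

end Filter

theorem filter_mem_union_left (m₁ m₂ : Finmap fun _ : α => β) :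
    (m₁ ∪ m₂).filter (· ∈ m₁) = m₁ :=
  ext_lookup fun a => by
    by_cases ha : a ∈ m₁
    · simp [ha, lookup_union_left ha]
    · simp [ha, lookup_eq_none.mpr ha]

theorem filter_not_mem_union_left {m₁ m₂ : Finmap fun _ : α => β} (hd : m₁.Disjoint m₂) :
    (m₁ ∪ m₂).filter (· ∉ m₁) = m₂ :=
  ext_lookup fun a => by
    by_cases ha : a ∈ m₁
    · simp [ha, lookup_eq_none.mpr (hd a ha)]
    · simp [ha, lookup_union_right ha]

theorem card_keys_union_sdiff {m₁ m₂ : Finmap fun _ : α => β} (hd : m₁.Disjoint m₂)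
    (L : Finset α) :
    ((m₁ ∪ m₂).keys \ L).card = (m₁.keys \ L).card + (m₂.keys \ L).card := by
  rw [keys_union, Finset.union_sdiff_distrib, Finset.card_union_of_disjoint]
  exact Finset.disjoint_left.mpr fun a ha ha' =>
    hd a (mem_keys.mp (Finset.mem_sdiff.mp ha).1) (mem_keys.mp (Finset.mem_sdiff.mp ha').1)

theorem exists_agree_card_sdiff_eq (m : Finmap fun _ : α => β) (b : β) {L s : Finset α}
    (hs : _root_.Disjoint s L) :
    ∃ m' : Finmap (fun _ : α => β), (∀ a ∈ L, m.lookup a = m'.lookup a) ∧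
      (m'.keys \ L).card = s.card ∧ ∀ a ∈ m', a ∈ L ∧ a ∈ m ∨ a ∈ s := by
  refine ⟨m.filter (· ∈ L) ∪ onFinset s fun _ => some b, fun a ha => ?_, ?_, fun a ha => ?_⟩
  · have has : a ∉ s := Finset.disjoint_right.mp hs ha
    simp [lookup_union_eq_or, ha, has]
  · have hfilter : (m.filter (· ∈ L)).keys \ L = ∅ := by
      ext a
      simp [mem_keys]
    simp [keys_union, Finset.union_sdiff_distrib, hfilter, Finset.sdiff_eq_self_of_disjoint hs]
  · rcases mem_union.mp ha with ha | ha
    · exact .inl ((mem_filter _).mp ha).symm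
    · exact .inr (by simpa [← mem_keys] using ha)

def Indist (L : Finset α) (n : ℕ) (m m' : Finmap fun _ : α => β) : Prop :=
  (∀ a ∈ L, m.lookup a = m'.lookup a) ∧ min (m.keys \ L).card n = min (m'.keys \ L).card n

namespace Indist

variable {L : Finset α} {n : ℕ} {m m' : Finmap fun _ : α => β}

theorem refl (L : Finset α) (n : ℕ) (m : Finmap fun _ : α => β) : Indist L n m m :=
  ⟨fun _ _ => rfl, rfl⟩

theorem symm (he : Indist L n m m') : Indist L n m' m :=
  ⟨fun a ha => (he.1 a ha).symm, he.2.symm⟩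

theorem mono {k : ℕ} (he : Indist L n m m') (hk : k ≤ n) : Indist L k m m' :=
  ⟨he.1, by have := he.2; omega⟩

theorem union {m₁ m₁' : Finmap fun _ : α => β} (he₁ : Indist L n m₁ m₁') (he : Indist L n m m')
    (hd : m₁.Disjoint m) (hd' : m₁'.Disjoint m') : Indist L n (m₁ ∪ m) (m₁' ∪ m') := by
  refine ⟨fun a ha => by rw [lookup_union_eq_or, lookup_union_eq_or, he₁.1 a ha, he.1 a ha], ?_⟩
  rw [card_keys_union_sdiff hd, card_keys_union_sdiff hd']
  have := he₁.2
  have := he.2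
  omega

theorem eq_of_card_sdiff_eq_zero (he : Indist L n m m') (hn : 0 < n)
    (h0 : (m.keys \ L).card = 0) : m' = m := by
  have h0' : (m'.keys \ L).card = 0 := by have := he.2; omega
  have hsub : ∀ {m : Finmap fun _ : α => β}, (m.keys \ L).card = 0 → ∀ a ∉ L, a ∉ m :=
    fun h0 a ha ham =>
      ha (Finset.sdiff_eq_empty_iff_subset.mp (Finset.card_eq_zero.mp h0) (mem_keys.mpr ham))
  refine ext_lookup fun a => ?_
  by_cases ha : a ∈ L
  · exact (he.1 a ha).symm
  · rw [lookup_eq_none.mpr (hsub h0' a ha), lookup_eq_none.mpr (hsub h0 a ha)]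

theorem exists_split {n₁ n₂ : ℕ} {m₁ m₂ : Finmap fun _ : α => β} (hd : m₁.Disjoint m₂)
    (he : Indist L (n₁ + n₂) (m₁ ∪ m₂) m') :
    ∃ m₁' m₂', m₁'.Disjoint m₂' ∧ m' = m₁' ∪ m₂' ∧ Indist L n₁ m₁ m₁' ∧ Indist L n₂ m₂ m₂' := by
  have hc := he.2
  rw [card_keys_union_sdiff hd] at hc
  obtain ⟨d₁, d₂, hsum, hd₁, hd₂⟩ := Nat.exists_add_eq_and_min_eq hc
  obtain ⟨s, hs, hcard⟩ := Finset.exists_subset_card_eq (show d₁ ≤ (m'.keys \ L).card by omega)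
  set p : α → Prop := fun a => a ∈ L ∧ a ∈ m₁ ∨ a ∈ s
  have hsplit := filter_union_filter_not p m'
  have hcard₁ : ((m'.filter p).keys \ L).card = d₁ := by
    rw [← hcard]
    congr 1
    ext a
    have := @hs a
    simp only [Finset.mem_sdiff, mem_keys, mem_filter, p] at this ⊢
    tauto
  have hcard₂ : ((m'.filter fun a => ¬p a).keys \ L).card = d₂ := by
    have := card_keys_union_sdiff (disjoint_filter_filter_not p m') L
    rw [hsplit] at this
    omega
  refine ⟨_, _, disjoint_filter_filter_not p m', hsplit.symm, ⟨fun a ha => ?_, hcard₁ ▸ hd₁⟩,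
    ⟨fun a ha => ?_, hcard₂ ▸ hd₂⟩⟩ <;>
  · have has : a ∉ s := fun h => (Finset.mem_sdiff.mp (hs h)).2 ha
    rw [lookup_filter, ← he.1 a ha]
    by_cases h₁ : a ∈ m₁
    · simp [p, ha, h₁, lookup_union_left h₁, lookup_eq_none.mpr (hd a h₁)]
    · simp [p, has, h₁, lookup_union_right h₁, lookup_eq_none.mpr h₁]

theorem exists_extension [Infinite α] [Nonempty β] (he : Indist L n m m')
    {m₁' : Finmap fun _ : α => β} (hd' : m₁'.Disjoint m') :
    ∃ m₁ : Finmap (fun _ : α => β), m₁.Disjoint m ∧ ∀ k, Indist L k m₁' m₁ := by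
  obtain ⟨s, hs, hcard⟩ :=
    (m.keys ∪ L).finite_toSet.infinite_compl.exists_subset_card_eq (m₁'.keys \ L).card
  have hsL : _root_.Disjoint s L := Finset.disjoint_left.mpr fun a ha haL => hs ha (by simp [haL])
  obtain ⟨m₁, hagree, hcard', hmem⟩ := exists_agree_card_sdiff_eq m₁' (Classical.arbitrary β) hsL
  refine ⟨m₁, fun a ha ham => ?_, fun k => ⟨hagree, by rw [hcard', hcard]⟩⟩
  rcases hmem a ha with ⟨haL, ha'⟩ | has
  · exact hd' a ha' ((mem_iff_of_lookup_eq (he.1 a haL)).mp ham)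
  · exact hs has (by simp [mem_keys.mpr ham])

end Indist

end Finmap

open Finmap

theorem firstN_subset (S : Set ℕ) (k : ℕ) : firstN S k ⊆ S := fun _ hl => hl.1

theorem Set.Infinite.exists_finset_subset_firstN {S : Set ℕ} (hS : S.Infinite) {j k : ℕ}
    (hj : j ≤ k) : ∃ t : Finset ℕ, t.card = j ∧ ↑t ⊆ firstN S k := by
  classical
  refine ⟨(Finset.range j).image (Nat.nth (· ∈ S)), ?_, ?_⟩
  · rw [Finset.card_image_of_injective _ (Nat.nth_injective (p := (· ∈ S)) hS), Finset.card_range]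
  · intro l hl
    obtain ⟨i, hi, rfl⟩ := Finset.mem_image.mp hl
    refine ⟨Nat.nth_mem_of_infinite hS i, ?_⟩
    have hbelow : {l' ∈ S | l' < Nat.nth (· ∈ S) i} =
        ↑((Finset.range (Nat.nth (· ∈ S) i)).filter (· ∈ S)) := by
      ext l'
      simp [and_comm]
    rw [hbelow, Set.ncard_coe_finset, ← Nat.count_eq_card_filter_range,
      Nat.count_nth_of_infinite (p := (· ∈ S)) hS]
    exact lt_of_lt_of_le (Finset.mem_range.mp hi) hj

theorem Finmap.exists_indist_keys_subset_firstN {β : Type*} [Nonempty β]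
    (m : Finmap fun _ : ℕ => β) {L : Finset ℕ} {S : Set ℕ} (hS : S.Infinite)
    (hSL : ∀ l ∈ S, l ∉ L) (N : ℕ) :
    ∃ m' : Finmap (fun _ : ℕ => β), Indist L N m' m ∧ ∀ l ∈ m', l ∈ L ∧ l ∈ m ∨ l ∈ firstN S N := by
  obtain ⟨t, hcard, ht⟩ := hS.exists_finset_subset_firstN (min_le_right (m.keys \ L).card N)
  have htL : _root_.Disjoint t L :=
    Finset.disjoint_left.mpr fun l hl => hSL l (firstN_subset S N (ht hl))
  obtain ⟨m', hagree, hcard', hmem⟩ := exists_agree_card_sdiff_eq m (Classical.arbitrary β) htL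
  refine ⟨m', ⟨fun l hl => (hagree l hl).symm, by omega⟩, fun l hl => ?_⟩
  exact (hmem l hl).imp_right fun h => ht h

noncomputable def locs (sx : ℕ → SVal) (s : Finset ℕ) : Finset ℕ :=
  (s.image sx).preimage Sum.inl Sum.inl_injective.injOn

theorem mem_locs {sx : ℕ → SVal} {s : Finset ℕ} {l : ℕ} :
    l ∈ locs sx s ↔ ∃ x ∈ s, sx x = .inl l := by
  simp [locs]

theorem locs_mono (sx : ℕ → SVal) {s t : Finset ℕ} (h : s ⊆ t) : locs sx s ⊆ locs sx t :=
  Finset.monotone_preimage Sum.inl_injective (Finset.image_subset_image h)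

theorem STerm.eval_embed (sx : ℕ → SVal) (sa : ℕ → Word) (t : STerm) :
    (t.embed sx).eval sa = t.eval sx sa := by
  induction t with
  | eps | atom | svar => rfl
  | conc t₁ t₂ ih₁ ih₂ => simp only [STerm.embed, STerm.eval, CTerm.eval, ih₁, ih₂]

theorem CTerm.exists_eval_eq_of_range (sx : ℕ → SVal) (sa : ℕ → Word) (S : Finset STerm)
    (w : Word) :
    ∃ ct : CTerm, ct.eval sa = w ∧
      ((∃ t ∈ S, ct = t.embed sx) ∨ ct = CTerm.const [] ∨
        ∃ w' : Word, ct = CTerm.const w' ∧ ∀ t ∈ S, (t.embed sx).eval sa ≠ w') := by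
  by_cases hS : ∃ t ∈ S, (t.embed sx).eval sa = w
  · obtain ⟨t, ht, rfl⟩ := hS
    exact ⟨t.embed sx, rfl, .inl ⟨t, ht, rfl⟩⟩
  · push Not at hS
    exact ⟨.const w, rfl, .inr (.inr ⟨w, rfl, hS⟩)⟩

namespace PFormula

variable {sx : ℕ → SVal} {sa : ℕ → Word}

theorem sat_iff_of_indist {φ : PFormula} {L : Finset ℕ} {n : ℕ} {h h' : Heap}
    (hL : locs sx φ.fvx ⊆ L) (hn : φ.sz ≤ n) (he : Indist L n h h') :
    φ.Sat sx sa h ↔ φ.Sat sx sa h' := by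
  induction φ generalizing n h h' with
  | eqx | eqs | fls => exact Iff.rfl
  | imp φ₁ φ₂ ih₁ ih₂ =>
    exact imp_congr (ih₁ ((locs_mono sx Finset.subset_union_left).trans hL)
        ((le_max_left _ _).trans hn) he)
      (ih₂ ((locs_mono sx Finset.subset_union_right).trans hL) ((le_max_right _ _).trans hn) he)
  | emp =>
    have key : ∀ {h h' : Heap}, Indist L n h h' → h = ∅ → h' = ∅ := by
      rintro h h' he rfl
      exact he.eq_of_card_sdiff_eq_zero hn (by simp)
    exact ⟨key he, key he.symm⟩
  | pto x t =>
    have key : ∀ {h h' : Heap}, Indist L n h h' →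
        (pto x t).Sat sx sa h → (pto x t).Sat sx sa h' := by
      rintro h h' he ⟨l, hl, rfl⟩
      have hlL : l ∈ L := hL (mem_locs.mpr ⟨x, by simp [fvx], hl⟩)
      exact ⟨l, hl, he.eq_of_card_sdiff_eq_zero hn (by simp [hlL])⟩
    exact ⟨key he, key he.symm⟩
  | star φ₁ φ₂ ih₁ ih₂ =>
    have key : ∀ {h h' : Heap}, Indist L n h h' →
        (star φ₁ φ₂).Sat sx sa h → (star φ₁ φ₂).Sat sx sa h' := by
      rintro h h' he ⟨h₁, h₂, hd, rfl, hs₁, hs₂⟩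
      obtain ⟨h₁', h₂', hd', rfl, he₁, he₂⟩ := (he.mono hn).exists_split hd
      exact ⟨h₁', h₂', hd', rfl,
        (ih₁ ((locs_mono sx Finset.subset_union_left).trans hL) le_rfl he₁).mp hs₁,
        (ih₂ ((locs_mono sx Finset.subset_union_right).trans hL) le_rfl he₂).mp hs₂⟩
    exact ⟨key he, key he.symm⟩
  | wand φ₁ φ₂ ih₁ ih₂ =>
    have key : ∀ {h h' : Heap}, Indist L n h h' →
        (wand φ₁ φ₂).Sat sx sa h → (wand φ₁ φ₂).Sat sx sa h' := by
      intro h h' he hsat h₁' hd' hs₁'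
      obtain ⟨h₁, hd, he₁⟩ := he.exists_extension hd'
      have hs₂ := hsat h₁ hd
        ((ih₁ ((locs_mono sx Finset.subset_union_left).trans hL) le_rfl (he₁ _)).mp hs₁')
      exact (ih₂ ((locs_mono sx Finset.subset_union_right).trans hL) hn
        ((he₁ n).symm.union he hd hd')).mp hs₂
    exact ⟨key he, key he.symm⟩

/-- The finitely many symbolic heaps of the `-*` clause of `Tsat` suffice: an arbitrary heap
extension is replaced by one with the same cells on the variables' locations, its other cells
moved to the first fresh locations, and its contents expressed by terms of the range `R`. -/
theorem sat_wand_of_tsat {φ₁ φ₂ : PFormula} {H : SymHeap}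
    (ih₁ : ∀ H : SymHeap, φ₁.Sat sx sa (H.map (CTerm.eval sa)) ↔ Tsat sx sa φ₁ H)
    (ih₂ : ∀ H : SymHeap, φ₂.Sat sx sa (H.map (CTerm.eval sa)) ↔ Tsat sx sa φ₂ H)
    (hT : Tsat sx sa (wand φ₁ φ₂) H) : (wand φ₁ φ₂).Sat sx sa (H.map (CTerm.eval sa)) := by
  intro h₁ hd hs₁
  set L := locs sx (φ₁.fvx ∪ φ₂.fvx)
  set S : Set ℕ := {l | l ∉ H.keys ∧ ∀ x ∈ φ₁.fvx ∪ φ₂.fvx, sx x ≠ .inl l}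
  have hS : S.Infinite := (H.keys ∪ L).finite_toSet.infinite_compl.mono fun l hl => by
    simp only [Set.mem_compl_iff, Finset.coe_union, Set.mem_union, Finset.mem_coe, not_or] at hl
    exact ⟨hl.1, fun x hx hxl => hl.2 (mem_locs.mpr ⟨x, hx, hxl⟩)⟩
  have hSL : ∀ l ∈ S, l ∉ L := fun l hl hlL =>
    let ⟨x, hx, hxl⟩ := mem_locs.mp hlL
    hl.2 x hx hxl
  obtain ⟨h₁', he, hdom⟩ := h₁.exists_indist_keys_subset_firstN hS hSL (max φ₁.sz φ₂.sz)
  obtain ⟨Hφ, rfl, hR⟩ := exists_map_eq_and_forall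
    (CTerm.exists_eval_eq_of_range sx sa (φ₁.seqTerms ∪ φ₂.seqTerms)) h₁'
  have hdφ : Hφ.Disjoint H := fun l hl hlH => by
    rcases hdom l (mem_map.mpr hl) with ⟨-, hl₁⟩ | hlS
    · exact hd l hl₁ (mem_map.mpr hlH)
    · exact (firstN_subset S _ hlS).1 (mem_keys.mpr hlH)
  have hD : ∀ l ∈ Hφ.keys, l ∈ firstN S (max φ₁.sz φ₂.sz) ∨
      ∃ x ∈ φ₁.fvx ∪ φ₂.fvx, sx x = .inl l := fun l hl =>
    ((hdom l (mem_map.mpr (mem_keys.mp hl))).imp_left fun h => mem_locs.mp h.1).symm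
  have hs₁' :=
    (sat_iff_of_indist (locs_mono sx Finset.subset_union_left) (le_max_left _ _) he).mpr hs₁
  have hs₂' := (ih₂ _).mpr (hT Hφ hdφ hD hR ((ih₁ Hφ).mp hs₁'))
  rw [map_union] at hs₂'
  exact (sat_iff_of_indist (locs_mono sx Finset.subset_union_right) (le_max_right _ _)
    (he.union (.refl _ _ _) (disjoint_map_iff.mpr hdφ) hd)).mp hs₂'

theorem sat_map_eval_iff_tsat (φ : PFormula) (H : SymHeap) :
    φ.Sat sx sa (H.map (CTerm.eval sa)) ↔ Tsat sx sa φ H := by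
  induction φ generalizing H with
  | eqx | eqs | fls => exact Iff.rfl
  | imp φ₁ φ₂ ih₁ ih₂ => exact imp_congr (ih₁ H) (ih₂ H)
  | emp => exact map_eq_empty_iff
  | pto x t => simp only [Sat, Tsat, map_eq_singleton_iff, STerm.eval_embed]
  | star φ₁ φ₂ ih₁ ih₂ =>
    constructor
    · rintro ⟨h₁, h₂, hd, hH, hs₁, hs₂⟩
      refine ⟨H.filter (· ∈ h₁), H.filter (· ∉ h₁), disjoint_filter_filter_not _ H,
        (filter_union_filter_not _ H).symm, (ih₁ _).mp ?_, (ih₂ _).mp ?_⟩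
      · rwa [map_filter, hH, filter_mem_union_left]
      · rwa [map_filter, hH, filter_not_mem_union_left hd]
    · rintro ⟨H₁, H₂, hd, rfl, ht₁, ht₂⟩
      exact ⟨_, _, disjoint_map_iff.mpr hd, map_union _ _ _, (ih₁ H₁).mpr ht₁, (ih₂ H₂).mpr ht₂⟩
  | wand φ₁ φ₂ ih₁ ih₂ =>
    refine ⟨fun hsat Hφ hd _ _ ht₁ => ?_, sat_wand_of_tsat ih₁ ih₂⟩
    rw [← ih₂, map_union]
    exact hsat _ (disjoint_map_iff.mpr hd) ((ih₁ Hφ).mpr ht₁)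

end PFormula

/-- Correctness of the reduction `T`: given the stack `sx` and the (finite)
heap `h`, represented symbolically by `H` (same domain, constant values),
there is an assignment of the sequence variables satisfying `φ` in the model
`(sx, ·, h)` iff the reduced quantifier-free sequence formula `T(sx, h, φ)`
is satisfiable. -/
theorem reduction_to_sequence_logic_correct
    (sx : ℕ → SVal) (h : Heap) (H : SymHeap)
    (hkeys : H.keys = h.keys)
    (hvals : ∀ (l : ℕ) (w : Word), h.lookup l = some w →
      H.lookup l = some (CTerm.const w))
    (φ : PFormula) :
    (∃ sa : ℕ → Word, PFormula.Sat sx sa φ h) ↔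
      (∃ sa : ℕ → Word, Tsat sx sa φ H) := by
  have hH : ∀ sa, H.map (CTerm.eval sa) = h := fun sa => ext_lookup fun l => by
    cases hl : h.lookup l with
    | some w => simp [hvals l w hl, CTerm.eval]
    | none =>
      rw [lookup_map, lookup_eq_none.mpr, Option.map_none]
      rwa [← mem_keys, hkeys, mem_keys, ← lookup_eq_none]
  exact exists_congr fun sa => hH sa ▸ PFormula.sat_map_eval_iff_tsat φ H
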